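/- Let A = (a_{ij}) be an n×n real matrix such that D(A) belongs to the class 𝒟, D(A) is strongly connected, and Δ_A ≠ 0, and let B = (b_{ij}) be the n×n matrix with entries b_{ij} = μ_{ij}/Δ_A. Then the diagonal entries of AB satisfy: (AB)_{ii} = 1 if i is a non-pendant vertex, and (AB)_{ii} = (Σ_{M ∈ 𝕄(i)} η(M))/Δ_A if i is a pendant vertex, where 𝕄(i) is the set of maximum matchings in which vertex i is matched and η(M) is the matching product of M. For i ≠ j: (AB)_{ij} = a_{qj} μ_{iq}/Δ_A if i and j are both pendant vertices with a common neighbour q, and (AB)_{ij} = 0 otherwise. -/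

import Mathlib

open Matrix

/-- Adjacency in a digraph given by relation `G`: a 2-cycle between distinct `i` and `j`. -/
def Adjd {n : ℕ} (G : Fin n → Fin n → Prop) (i j : Fin n) : Prop :=
  i ≠ j ∧ G i j ∧ G j i

/-- `G` is a simple symmetric digraph: no loops and edges come in both directions. -/
def IsSSD {n : ℕ} (G : Fin n → Fin n → Prop) : Prop :=
  (∀ i, ¬ G i i) ∧ ∀ i j, G i j → G j i

/-- A vertex is pendant if it is incident to exactly one 2-cycle. -/
def Pendant {n : ℕ} (G : Fin n → Fin n → Prop) (i : Fin n) : Prop :=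
  ∃! j, Adjd G i j

/-- The class 𝒟: simple symmetric digraphs in which every non-pendant vertex is
adjacent to at least one pendant vertex. -/
def InClassD {n : ℕ} (G : Fin n → Fin n → Prop) : Prop :=
  IsSSD G ∧ ∀ i, ¬ Pendant G i → ∃ j, Adjd G i j ∧ Pendant G j

/-- Strong connectivity: a directed path from every vertex to every other vertex. -/
def StronglyConnected {n : ℕ} (G : Fin n → Fin n → Prop) : Prop :=
  ∀ i j : Fin n, Relation.ReflTransGen G i j

/-- An unordered pair `e` is a 2-cycle of `G`. -/
def IsEdge {n : ℕ} (G : Fin n → Fin n → Prop) (e : Sym2 (Fin n)) : Prop :=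
  ∃ i j, e = s(i, j) ∧ Adjd G i j

/-- A matching: a set of pairwise vertex-disjoint 2-cycles. -/
def IsMatching {n : ℕ} (G : Fin n → Fin n → Prop) (M : Finset (Sym2 (Fin n))) : Prop :=
  (∀ e ∈ M, IsEdge G e) ∧
  ∀ e ∈ M, ∀ f ∈ M, e ≠ f → ∀ v : Fin n, v ∈ e → v ∉ f

/-- A maximum matching: a matching of maximum cardinality. -/
def IsMaxMatching {n : ℕ} (G : Fin n → Fin n → Prop) (M : Finset (Sym2 (Fin n))) : Prop :=
  IsMatching G M ∧ ∀ M', IsMatching G M' → M'.card ≤ M.card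

/-- A cycle chain, recorded by its list of (distinct) vertices `i₁, …, i_{m+1}`. -/
def IsCycleChain {n : ℕ} (G : Fin n → Fin n → Prop) (c : List (Fin n)) : Prop :=
  c.Nodup ∧ 2 ≤ c.length ∧ c.Chain' (Adjd G)

/-- A cycle chain from `i` to `j`. -/
def IsCycleChainBtw {n : ℕ} (G : Fin n → Fin n → Prop) (i j : Fin n) (c : List (Fin n)) : Prop :=
  IsCycleChain G c ∧ c.head? = some i ∧ c.getLast? = some j

/-- The list of 2-cycles of a cycle chain. -/
def chainEdges {n : ℕ} (c : List (Fin n)) : List (Sym2 (Fin n)) :=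
  List.zipWith (fun a b => s(a, b)) c c.tail

/-- The cycle chain `c` is alternating with respect to `M`: its 2-cycles are alternately
in `M` and outside `M`, with the first and last 2-cycle in `M` (so its length is odd). -/
def IsAltChain {n : ℕ} (M : Finset (Sym2 (Fin n))) (c : List (Fin n)) : Prop :=
  Odd (chainEdges c).length ∧
  ∀ k (h : k < (chainEdges c).length), ((chainEdges c).get ⟨k, h⟩ ∈ M ↔ Even k)

/-- The digraph of a square matrix: edge `(i,j)` iff `A i j ≠ 0`. -/
def DA {n : ℕ} (A : Matrix (Fin n) (Fin n) ℝ) : Fin n → Fin n → Prop :=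
  fun i j => A i j ≠ 0

/-- The cycle product `a_{ij} a_{ji}` of a 2-cycle. -/
def cycProd {n : ℕ} (A : Matrix (Fin n) (Fin n) ℝ) (e : Sym2 (Fin n)) : ℝ :=
  Sym2.lift ⟨fun i j => A i j * A j i, fun i j => mul_comm _ _⟩ e

/-- The matching product η(M) of a matching `M`. -/
noncomputable def matchProd {n : ℕ} (A : Matrix (Fin n) (Fin n) ℝ)
    (M : Finset (Sym2 (Fin n))) : ℝ :=
  ∏ e ∈ M, cycProd A e

/-- The (finite) collection of all maximum matchings of `D(A)`. -/
noncomputable def maxMatchings {n : ℕ} (A : Matrix (Fin n) (Fin n) ℝ) :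
    Finset (Finset (Sym2 (Fin n))) :=
  {M | IsMaxMatching (DA A) M}.toFinite.toFinset

/-- Δ_A: the sum of the matching products over all maximum matchings of `D(A)`. -/
noncomputable def Delta {n : ℕ} (A : Matrix (Fin n) (Fin n) ℝ) : ℝ :=
  ∑ M ∈ maxMatchings A, matchProd A M

/-- 𝕄(i,j): maximum matchings with respect to which some cycle chain from `i` to `j`
is an alternating cycle chain. -/
def MMset {n : ℕ} (A : Matrix (Fin n) (Fin n) ℝ) (i j : Fin n) :
    Set (Finset (Sym2 (Fin n))) :=
  {M | IsMaxMatching (DA A) M ∧ ∃ c, IsCycleChainBtw (DA A) i j c ∧ IsAltChain M c}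

/-- `i` and `j` are maximally matchable: 𝕄(i,j) ≠ ∅. -/
def MaxMatchable {n : ℕ} (A : Matrix (Fin n) (Fin n) ℝ) (i j : Fin n) : Prop :=
  (MMset A i j).Nonempty

open scoped Classical in
/-- The (unique) alternating cycle chain from `i` to `j`, when it exists. -/
noncomputable def theChain {n : ℕ} (A : Matrix (Fin n) (Fin n) ℝ) (i j : Fin n) :
    List (Fin n) :=
  if h : ∃ c, IsCycleChainBtw (DA A) i j c ∧ ∃ M ∈ MMset A i j, IsAltChain M c
  then h.choose else []

/-- The path product along a cycle chain: `a_{i₁ i₂} a_{i₂ i₃} ⋯ a_{i_m i_{m+1}}`. -/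
def pathProd {n : ℕ} (A : Matrix (Fin n) (Fin n) ℝ) (c : List (Fin n)) : ℝ :=
  (List.zipWith (fun a b => A a b) c c.tail).prod

open scoped Classical in
/-- β_{ij} = (−1)^{(m−1)/2} P_m(i,j) for maximally matchable `i, j`, and `0` otherwise. -/
noncomputable def beta {n : ℕ} (A : Matrix (Fin n) (Fin n) ℝ) (i j : Fin n) : ℝ :=
  if MaxMatchable A i j then
    (-1 : ℝ) ^ (((theChain A i j).length - 2) / 2) * pathProd A (theChain A i j)
  else 0

/-- β̄_{i,j}(M): product of the cycle products of the 2-cycles of `M` not contained in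
the alternating cycle chain from `i` to `j`. -/
noncomputable def betaBar {n : ℕ} (A : Matrix (Fin n) (Fin n) ℝ) (i j : Fin n)
    (M : Finset (Sym2 (Fin n))) : ℝ :=
  ∏ e ∈ M.filter (fun e => e ∉ chainEdges (theChain A i j)), cycProd A e

/-- μ_{ij} = β_{ij} · Σ_{M ∈ 𝕄(i,j)} β̄_{i,j}(M). -/
noncomputable def mu {n : ℕ} (A : Matrix (Fin n) (Fin n) ℝ) (i j : Fin n) : ℝ :=
  beta A i j * ∑ M ∈ (MMset A i j).toFinite.toFinset, betaBar A i j M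

/-- `X` is a group inverse of `A`. -/
def IsGroupInverse {n : ℕ} (A X : Matrix (Fin n) (Fin n) ℝ) : Prop :=
  A * X * A = A ∧ X * A * X = X ∧ A * X = X * A

/-- A tree digraph: strongly connected and all of its cycles have length 2. -/
def IsTreeDigraph {n : ℕ} (G : Fin n → Fin n → Prop) : Prop :=
  StronglyConnected G ∧
  ∀ (a : Fin n) (l : List (Fin n)), (a :: l).Nodup → List.Chain G a l →
    G ((a :: l).getLast (List.cons_ne_nil a l)) a → (a :: l).length = 2

/-- A star tree digraph: a tree digraph with a center adjacent to every other vertex,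
every other vertex being adjacent only to the center. -/
def IsStarTree {n : ℕ} (G : Fin n → Fin n → Prop) : Prop :=
  IsTreeDigraph G ∧
  ∃ c : Fin n, (∀ j, j ≠ c → Adjd G c j) ∧ ∀ i j, Adjd G i j → i = c ∨ j = c

/-- A corona digraph: a simple symmetric digraph in which each non-pendant vertex is
adjacent to exactly one pendant vertex. -/
def IsCorona {n : ℕ} (G : Fin n → Fin n → Prop) : Prop :=
  IsSSD G ∧ ∀ i, ¬ Pendant G i → ∃! j, Adjd G i j ∧ Pendant G j

/-- 𝕄(i): the maximum matchings in which vertex `i` is matched. -/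
noncomputable def MMi {n : ℕ} (A : Matrix (Fin n) (Fin n) ℝ) (i : Fin n) :
    Finset (Finset (Sym2 (Fin n))) :=
  {M | IsMaxMatching (DA A) M ∧ ∃ e ∈ M, i ∈ e}.toFinite.toFinset


/-!
In a digraph of class 𝒟 every maximum matching covers all non-pendant vertices and never
pairs two non-pendant vertices: otherwise trading such a 2-cycle for a pendant one would give
a maximum matching missing a non-pendant vertex. Hence an alternating cycle chain is either a
single matched 2-cycle `(i, j)`, or `p, u, v, p'` with pendant ends, and `μ` becomes explicit:
`μ_ij = a_ij Σ_{M ∋ (i,j)} η(M ∖ (i,j))` for adjacent `i, j`, and a signed three-edge analogue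
for pendant `i, j`.

Expanding `(AB)_ij = Σ_k a_ik μ_kj / Δ_A` over maximum matchings, each `M` contributes `η(M)`
to the diagonal exactly when it matches `i`. Off the diagonal, every term vanishes unless `j`
is pendant and `i` is adjacent to the neighbour `q` of `j`. If `i` is not pendant, the term
`k = q` cancels, matching by matching, against the term of the pendant partner of `i`. If `i`
is pendant, replacing the 2-cycle `(i, q)` by `(j, q)` is a bijection between the maximum
matchings containing them, which gives `a_iq μ_qj = a_qj μ_iq`.
-/

section Matching

variable {n : ℕ} {G : Fin n → Fin n → Prop}

lemma Adjd.symm {i j : Fin n} (h : Adjd G i j) : Adjd G j i :=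
  ⟨h.1.symm, h.2.2, h.2.1⟩

lemma Pendant.eq_of_adjd {i a b : Fin n} (hi : Pendant G i) (ha : Adjd G i a)
    (hb : Adjd G i b) : a = b :=
  hi.unique ha hb

def Matched (M : Finset (Sym2 (Fin n))) (v : Fin n) : Prop := ∃ e ∈ M, v ∈ e

variable {M : Finset (Sym2 (Fin n))}

lemma matched_iff_exists_mk_mem {v : Fin n} : Matched M v ↔ ∃ w, s(w, v) ∈ M := by
  constructor
  · rintro ⟨e, he, hve⟩
    induction e with
    | _ a b =>
      rcases Sym2.mem_iff.mp hve with rfl | rfl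
      · exact ⟨b, Sym2.eq_swap ▸ he⟩
      · exact ⟨a, he⟩
  · rintro ⟨w, hw⟩
    exact ⟨_, hw, Sym2.mem_mk_right w v⟩

lemma IsMatching.adjd (hM : IsMatching G M) {a b : Fin n} (h : s(a, b) ∈ M) :
    Adjd G a b := by
  obtain ⟨x, y, hxy, hadj⟩ := hM.1 _ h
  rcases Sym2.eq_iff.mp hxy with ⟨rfl, rfl⟩ | ⟨rfl, rfl⟩
  · exact hadj
  · exact hadj.symm

lemma IsMatching.eq_of_mem (hM : IsMatching G M) {e f : Sym2 (Fin n)} {v : Fin n}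
    (he : e ∈ M) (hf : f ∈ M) (hve : v ∈ e) (hvf : v ∈ f) : e = f := by
  by_contra hne
  exact hM.2 e he f hf hne v hve hvf

lemma IsMatching.partner_unique (hM : IsMatching G M) {a b c : Fin n}
    (ha : s(a, c) ∈ M) (hb : s(b, c) ∈ M) : a = b := by
  rcases Sym2.eq_iff.mp (hM.eq_of_mem ha hb (Sym2.mem_mk_right a c) (Sym2.mem_mk_right b c))
    with ⟨h, -⟩ | ⟨h, -, rfl⟩
  · exact h
  · exact absurd h (hM.adjd ha).1

open scoped Classical in
lemma IsMatching.sum_ite_mk_mem {R : Type*} [AddCommMonoid R] (hM : IsMatching G M)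
    (i : Fin n) (x : R) :
    ∑ k, (if s(k, i) ∈ M then x else 0) = if Matched M i then x else 0 := by
  split_ifs with hi
  · obtain ⟨p, hp⟩ := matched_iff_exists_mk_mem.mp hi
    rw [Finset.sum_eq_single p (fun k _ hkp => if_neg fun hk => hkp (hM.partner_unique hk hp))
      (by simp), if_pos hp]
  · exact Finset.sum_eq_zero fun k _ => if_neg fun hk => hi ⟨_, hk, Sym2.mem_mk_right k i⟩

lemma IsMatching.eq_of_pendant (hM : IsMatching G M) {p u : Fin n} (hp : Pendant G p)
    (hpu : Adjd G p u) {e : Sym2 (Fin n)} (he : e ∈ M) (hpe : p ∈ e) : e = s(p, u) := by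
  induction e with
  | _ a b =>
    rcases Sym2.mem_iff.mp hpe with rfl | rfl
    · obtain rfl := hp.eq_of_adjd (hM.adjd he) hpu
      rfl
    · obtain rfl := hp.eq_of_adjd (hM.adjd (Sym2.eq_swap ▸ he)) hpu
      exact Sym2.eq_swap

lemma IsMatching.insert (hM : IsMatching G M) {a b : Fin n} (hab : Adjd G a b)
    (ha : ¬ Matched M a) (hb : ¬ Matched M b) : IsMatching G (insert s(a, b) M) := by
  have hfree : ∀ f ∈ M, ∀ v ∈ s(a, b), v ∉ f := by
    intro f hf v hv hvf
    rcases Sym2.mem_iff.mp hv with rfl | rfl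
    exacts [ha ⟨f, hf, hvf⟩, hb ⟨f, hf, hvf⟩]
  refine ⟨fun e he => ?_, fun e he f hf hne v hve hvf => ?_⟩
  · rcases Finset.mem_insert.mp he with rfl | he
    exacts [⟨a, b, rfl, hab⟩, hM.1 e he]
  · rcases Finset.mem_insert.mp he with rfl | he <;> rcases Finset.mem_insert.mp hf with rfl | hf
    exacts [hne rfl, hfree f hf v hve hvf, hfree e he v hvf hve, hM.2 e he f hf hne v hve hvf]

lemma IsMatching.not_matched_erase (hM : IsMatching G M) {e : Sym2 (Fin n)} (he : e ∈ M)
    {v : Fin n} (hv : v ∈ e) : ¬ Matched (M.erase e) v := by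
  rintro ⟨f, hf, hvf⟩
  exact Finset.ne_of_mem_erase hf (hM.eq_of_mem (Finset.mem_of_mem_erase hf) he hvf hv)

lemma IsMaxMatching.exchange (hM : IsMaxMatching G M) {e : Sym2 (Fin n)} (he : e ∈ M)
    {a b : Fin n} (hab : Adjd G a b) (ha : ¬ Matched (M.erase e) a)
    (hb : ¬ Matched (M.erase e) b) : IsMaxMatching G (insert s(a, b) (M.erase e)) := by
  have hmatch : IsMatching G (M.erase e) :=
    ⟨fun f hf => hM.1.1 f (Finset.mem_of_mem_erase hf), fun f hf g hg =>
      hM.1.2 f (Finset.mem_of_mem_erase hf) g (Finset.mem_of_mem_erase hg)⟩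
  have hnew : s(a, b) ∉ M.erase e := fun h => ha ⟨_, h, Sym2.mem_mk_left a b⟩
  have hcard : (insert s(a, b) (M.erase e)).card = M.card := by
    rw [Finset.card_insert_of_notMem hnew, Finset.card_erase_add_one he]
  exact ⟨hmatch.insert hab ha hb, fun M' hM' => hcard ▸ hM.2 M' hM'⟩

lemma IsMaxMatching.exchange_pendant (hM : IsMaxMatching G M) {x y q : Fin n}
    (hxq : s(x, q) ∈ M) (hy : Pendant G y) (hyq : Adjd G y q) :
    IsMaxMatching G (insert s(y, q) (M.erase s(x, q))) ∧ s(y, q) ∉ M.erase s(x, q) := by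
  have hyfree : ¬ Matched (M.erase s(x, q)) y := by
    rintro ⟨e, he, hye⟩
    have heq := hM.1.eq_of_pendant hy hyq (Finset.mem_of_mem_erase he) hye
    refine Finset.ne_of_mem_erase he (hM.1.eq_of_mem (Finset.mem_of_mem_erase he) hxq ?_
      (Sym2.mem_mk_right x q))
    exact heq ▸ Sym2.mem_mk_right y q
  exact ⟨hM.exchange hxq hyq hyfree (hM.1.not_matched_erase hxq (Sym2.mem_mk_right x q)),
    fun h => hyfree ⟨_, h, Sym2.mem_mk_left y q⟩⟩

end Matching

section ClassD

variable {n : ℕ} {G : Fin n → Fin n → Prop} {M : Finset (Sym2 (Fin n))}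

lemma not_pendant_of_adjd_of_adjd {u a b : Fin n} (ha : Adjd G u a) (hb : Adjd G u b)
    (hab : a ≠ b) : ¬ Pendant G u :=
  fun hu => hab (hu.eq_of_adjd ha hb)

lemma InClassD.matched_of_not_pendant (hG : InClassD G) (hM : IsMaxMatching G M) {i : Fin n}
    (hi : ¬ Pendant G i) : Matched M i := by
  by_contra hfree
  obtain ⟨p, hip, hp⟩ := hG.2 i hi
  have hpfree : ¬ Matched M p := fun ⟨e, he, hpe⟩ =>
    hfree ⟨e, he, hM.1.eq_of_pendant hp hip.symm he hpe ▸ Sym2.mem_mk_right p i⟩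
  have hbigger := hM.2 _ (hM.1.insert hip.symm hpfree hfree)
  rw [Finset.card_insert_of_notMem fun h => hfree ⟨_, h, Sym2.mem_mk_right p i⟩] at hbigger
  omega

lemma InClassD.pendant_or_pendant (hG : InClassD G) (hM : IsMaxMatching G M) {u v : Fin n}
    (h : s(u, v) ∈ M) : Pendant G u ∨ Pendant G v := by
  by_contra! ⟨hu, hv⟩
  obtain ⟨p, hup, hp⟩ := hG.2 u hu
  have hpfree : ¬ Matched (M.erase s(u, v)) p := by
    rintro ⟨e, he, hpe⟩
    have hpu : e = s(p, u) := hM.1.eq_of_pendant hp hup.symm (Finset.mem_of_mem_erase he) hpe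
    exact Finset.ne_of_mem_erase he <| hM.1.eq_of_mem (Finset.mem_of_mem_erase he) h
      (hpu ▸ Sym2.mem_mk_right p u) (Sym2.mem_mk_left u v)
  have hM' := hM.exchange h hup.symm hpfree (hM.1.not_matched_erase h (Sym2.mem_mk_left u v))
  obtain ⟨e, he, hve⟩ := hG.matched_of_not_pendant hM' hv
  rcases Finset.mem_insert.mp he with rfl | he
  · rcases Sym2.mem_iff.mp hve with hvp | hvu
    exacts [hv (hvp ▸ hp), (hM.1.adjd h).1 hvu.symm]
  · exact hM.1.not_matched_erase h (Sym2.mem_mk_right u v) ⟨e, he, hve⟩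

end ClassD

section Chain

variable {n : ℕ} {G : Fin n → Fin n → Prop} {M : Finset (Sym2 (Fin n))}

def IsShortChain (G : Fin n → Fin n → Prop) (i j : Fin n) (c : List (Fin n)) : Prop :=
  c = [i, j] ∨ Pendant G i ∧ Pendant G j ∧ ∃ u v, c = [i, u, v, j]

lemma isAltChain_pair {a b : Fin n} : IsAltChain M [a, b] ↔ s(a, b) ∈ M := by
  refine ⟨fun h => by simpa [chainEdges] using h.2 0 (by simp [chainEdges]), fun h => ?_⟩
  refine ⟨by simp [chainEdges], fun k hk => ?_⟩
  obtain rfl : k = 0 := by simpa [chainEdges] using hk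
  simpa [chainEdges] using h

lemma isAltChain_quad {a u v b : Fin n} :
    IsAltChain M [a, u, v, b] ↔ s(a, u) ∈ M ∧ s(u, v) ∉ M ∧ s(v, b) ∈ M := by
  refine ⟨fun h => ⟨?_, ?_, ?_⟩, fun h => ⟨by simp [chainEdges, Nat.odd_iff], fun k hk => ?_⟩⟩
  · simpa [chainEdges] using h.2 0 (by simp [chainEdges])
  · simpa [chainEdges] using h.2 1 (by simp [chainEdges])
  · simpa [chainEdges] using h.2 2 (by simp [chainEdges])
  · have hk3 : k < 3 := by simpa [chainEdges] using hk
    interval_cases k <;> simp [chainEdges, h]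

lemma isCycleChain_iff {c : List (Fin n)} :
    IsCycleChain G c ↔ c.Nodup ∧ 2 ≤ c.length ∧ c.IsChain (Adjd G) :=
  Iff.rfl

lemma isCycleChainBtw_pair {i j : Fin n} : IsCycleChainBtw G i j [i, j] ↔ Adjd G i j := by
  simp only [IsCycleChainBtw, isCycleChain_iff, List.isChain_pair]
  exact ⟨fun h => h.1.2.2, fun h => ⟨⟨by simpa using h.1, by simp, h⟩, rfl, rfl⟩⟩

lemma isCycleChainBtw_quad {i u v j : Fin n} :
    IsCycleChainBtw G i j [i, u, v, j] ↔
      [i, u, v, j].Nodup ∧ Adjd G i u ∧ Adjd G u v ∧ Adjd G v j := by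
  simp [IsCycleChainBtw, isCycleChain_iff, List.isChain_cons_cons]

lemma InClassD.isShortChain (hG : InClassD G) (hM : IsMaxMatching G M) {i j : Fin n}
    {c : List (Fin n)} (hc : IsCycleChainBtw G i j c) (halt : IsAltChain M c) :
    IsShortChain G i j c := by
  obtain ⟨hcc, hi, hj⟩ := hc
  obtain ⟨hnd, hlen, hch⟩ := isCycleChain_iff.mp hcc
  match c with
  | [] | [_] => simp at hlen
  | [a, b] =>
    left
    simp only [List.head?_cons, List.getLast?_cons_cons, List.getLast?_singleton,
      Option.some.injEq] at hi hj
    rw [hi, hj]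
  | [_, _, _] => simp [IsAltChain, chainEdges, Nat.odd_iff] at halt
  | [a, u, v, b] =>
    right
    simp only [List.head?_cons, List.getLast?_cons_cons, List.getLast?_singleton,
      Option.some.injEq] at hi hj
    subst hi hj
    simp only [List.nodup_cons, List.mem_cons, List.not_mem_nil] at hnd
    simp only [List.isChain_cons_cons, List.isChain_singleton, and_true] at hch
    obtain ⟨hau, -, hvb⟩ := isAltChain_quad.mp halt
    have hu := not_pendant_of_adjd_of_adjd hch.1.symm hch.2.1 (by tauto)
    have hv := not_pendant_of_adjd_of_adjd hch.2.1.symm hch.2.2 (by tauto)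
    exact ⟨(hG.pendant_or_pendant hM hau).resolve_right hu,
      (hG.pendant_or_pendant hM hvb).resolve_left hv, u, v, rfl⟩
  | a :: b :: u :: v :: w :: t =>
    exfalso
    simp only [List.nodup_cons, List.mem_cons] at hnd
    simp only [List.isChain_cons_cons] at hch
    have huv : s(u, v) ∈ M := by
      simpa [chainEdges] using halt.2 2 (by simp [chainEdges])
    rcases hG.pendant_or_pendant hM huv with hu | hv
    · exact not_pendant_of_adjd_of_adjd hch.2.1.symm hch.2.2.1 (by tauto) hu
    · exact not_pendant_of_adjd_of_adjd hch.2.2.1.symm hch.2.2.2.1 (by tauto) hv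

lemma IsShortChain.eq {i j : Fin n} {c c' : List (Fin n)} (h : IsShortChain G i j c)
    (h' : IsShortChain G i j c') (hc : IsCycleChainBtw G i j c)
    (hc' : IsCycleChainBtw G i j c') : c = c' := by
  rcases h with rfl | ⟨hi, hj, u, v, rfl⟩ <;> rcases h' with rfl | ⟨hi', -, u', v', rfl⟩
  · rfl
  · obtain ⟨hnd, hiu, -⟩ := isCycleChainBtw_quad.mp hc'
    obtain rfl := hi'.eq_of_adjd hiu (isCycleChainBtw_pair.mp hc)
    simp at hnd
  · obtain ⟨hnd, hiu, -⟩ := isCycleChainBtw_quad.mp hc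
    obtain rfl := hi.eq_of_adjd hiu (isCycleChainBtw_pair.mp hc')
    simp at hnd
  · obtain ⟨-, hiu, -, hvj⟩ := isCycleChainBtw_quad.mp hc
    obtain ⟨-, hiu', -, hvj'⟩ := isCycleChainBtw_quad.mp hc'
    rw [hi.eq_of_adjd hiu hiu', hj.eq_of_adjd hvj.symm hvj'.symm]

end Chain

section Mu

variable {n : ℕ} {A : Matrix (Fin n) (Fin n) ℝ} {M : Finset (Sym2 (Fin n))} {i j : Fin n}
  {c : List (Fin n)}

lemma mem_maxMatchings : M ∈ maxMatchings A ↔ IsMaxMatching (DA A) M := by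
  simp [maxMatchings]

lemma theChain_eq (hG : InClassD (DA A)) (hc : IsCycleChainBtw (DA A) i j c)
    (hs : IsShortChain (DA A) i j c) (h : MaxMatchable A i j) : theChain A i j = c := by
  obtain ⟨M, hM, c₀, hc₀, halt₀⟩ := h
  have hex : ∃ c, IsCycleChainBtw (DA A) i j c ∧ ∃ M ∈ MMset A i j, IsAltChain M c :=
    ⟨c₀, hc₀, M, ⟨hM, c₀, hc₀, halt₀⟩, halt₀⟩
  obtain ⟨hc', M', hM', halt'⟩ := hex.choose_spec
  rw [theChain, dif_pos hex]
  exact (hG.isShortChain hM'.1 hc' halt').eq hs hc' hc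

lemma mem_MMset_iff (hG : InClassD (DA A)) (hc : IsCycleChainBtw (DA A) i j c)
    (hs : IsShortChain (DA A) i j c) :
    M ∈ MMset A i j ↔ IsMaxMatching (DA A) M ∧ IsAltChain M c :=
  ⟨fun ⟨hM, _, hc', halt'⟩ => ⟨hM, (hG.isShortChain hM hc' halt').eq hs hc' hc ▸ halt'⟩,
    fun ⟨hM, halt⟩ => ⟨hM, c, hc, halt⟩⟩

lemma mu_of_not_maxMatchable (h : ¬ MaxMatchable A i j) : mu A i j = 0 := by
  rw [mu, beta, if_neg h, zero_mul]

open scoped Classical in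
lemma mu_eq_of_isShortChain (hG : InClassD (DA A)) (hc : IsCycleChainBtw (DA A) i j c)
    (hs : IsShortChain (DA A) i j c) :
    mu A i j = (-1) ^ ((c.length - 2) / 2) * pathProd A c *
      ∑ M ∈ (maxMatchings A).filter (IsAltChain · c),
        ∏ e ∈ M.filter (· ∉ chainEdges c), cycProd A e := by
  have hset : (MMset A i j).toFinite.toFinset = (maxMatchings A).filter (IsAltChain · c) := by
    ext M
    simp [mem_maxMatchings, mem_MMset_iff hG hc hs]
  by_cases h : MaxMatchable A i j
  · simp only [mu, beta, if_pos h, hset, betaBar, theChain_eq hG hc hs h]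
  · rw [mu_of_not_maxMatchable h, Finset.filter_eq_empty_iff.mpr, Finset.sum_empty, mul_zero]
    exact fun M hM halt => h ⟨M, mem_maxMatchings.mp hM, c, hc, halt⟩

open scoped Classical in
lemma mu_of_adjd (hG : InClassD (DA A)) (h : Adjd (DA A) i j) :
    mu A i j = A i j * ∑ M ∈ (maxMatchings A).filter (s(i, j) ∈ ·),
      ∏ e ∈ M.erase s(i, j), cycProd A e := by
  rw [mu_eq_of_isShortChain hG (isCycleChainBtw_pair.mpr h) (Or.inl rfl)]
  simp [pathProd, isAltChain_pair, chainEdges, Finset.filter_ne']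

open scoped Classical in
lemma mu_of_pendant_of_pendant (hG : InClassD (DA A)) {u v : Fin n}
    (hc : IsCycleChainBtw (DA A) i j [i, u, v, j]) (hi : Pendant (DA A) i)
    (hj : Pendant (DA A) j) :
    mu A i j = -(A i u * A u v * A v j) *
      ∑ M ∈ (maxMatchings A).filter (fun M => s(i, u) ∈ M ∧ s(v, j) ∈ M),
        ∏ e ∈ (M.erase s(i, u)).erase s(v, j), cycProd A e := by
  obtain ⟨hnd, -⟩ := isCycleChainBtw_quad.mp hc
  have hfree : ∀ M ∈ maxMatchings A, s(i, u) ∈ M → s(u, v) ∉ M := by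
    intro M hM hiu huv
    rw [Sym2.eq_swap] at huv
    have := (mem_maxMatchings.mp hM).1.partner_unique huv hiu
    simp_all
  rw [mu_eq_of_isShortChain hG hc (Or.inr ⟨hi, hj, u, v, rfl⟩)]
  have hlen : ([i, u, v, j].length - 2) / 2 = 1 := by simp
  have hpath : pathProd A [i, u, v, j] = A i u * A u v * A v j := by simp [pathProd, mul_assoc]
  rw [hlen, hpath, pow_one, neg_one_mul]
  congr 1
  rw [Finset.sum_filter, Finset.sum_filter]
  refine Finset.sum_congr rfl fun M hM => ?_
  by_cases hiu : s(i, u) ∈ M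
  · have huv := hfree M hM hiu
    simp only [isAltChain_quad, hiu, huv, not_false_eq_true, true_and]
    split_ifs
    · congr 1
      ext e
      simp only [chainEdges, List.tail_cons, List.zipWith_cons_cons, List.zipWith_nil_right,
        List.mem_cons, List.not_mem_nil, Finset.mem_filter, Finset.mem_erase]
      constructor
      · rintro ⟨he, hne⟩; tauto
      · rintro ⟨h1, h2, he⟩
        exact ⟨he, by rintro (rfl | rfl | rfl | h) <;> tauto⟩
    · rfl
  · simp [isAltChain_quad, hiu]

lemma MaxMatchable.exists_mem_or_pendant (hG : InClassD (DA A)) (h : MaxMatchable A i j) :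
    (∃ M, IsMaxMatching (DA A) M ∧ s(i, j) ∈ M) ∨ Pendant (DA A) i ∧ Pendant (DA A) j ∧
      ∃ u v, Adjd (DA A) i u ∧ Adjd (DA A) u v ∧ Adjd (DA A) v j := by
  obtain ⟨M, hM, c, hc, halt⟩ := h
  rcases hG.isShortChain hM hc halt with rfl | ⟨hi, hj, u, v, rfl⟩
  · exact Or.inl ⟨M, hM, isAltChain_pair.mp halt⟩
  · obtain ⟨-, hiu, huv, hvj⟩ := isCycleChainBtw_quad.mp hc
    exact Or.inr ⟨hi, hj, u, v, hiu, huv, hvj⟩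

end Mu

section RowSums

open scoped Classical

variable {n : ℕ} {A : Matrix (Fin n) (Fin n) ℝ} {i j q : Fin n}

lemma InClassD.adjd_of_ne_zero (hG : InClassD (DA A)) {k : Fin n} (h : A i k ≠ 0) :
    Adjd (DA A) i k :=
  ⟨fun hik => hG.1.1 k (hik ▸ h), h, hG.1.2 i k h⟩

lemma mul_mu_eq_sum (hG : InClassD (DA A)) (i j : Fin n) :
    A j i * mu A i j = ∑ M ∈ maxMatchings A, if s(i, j) ∈ M then matchProd A M else 0 := by
  by_cases h : Adjd (DA A) i j
  · rw [mu_of_adjd hG h, ← mul_assoc, Finset.mul_sum, ← Finset.sum_filter]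
    refine Finset.sum_congr rfl fun M hM => ?_
    rw [matchProd, ← Finset.mul_prod_erase _ _ (Finset.mem_filter.mp hM).2, cycProd,
      mul_comm (A j i)]
    rfl
  · have hji : A j i = 0 := by
      by_contra hji
      exact h (hG.adjd_of_ne_zero hji).symm
    rw [hji, zero_mul]
    exact (Finset.sum_eq_zero fun M hM =>
      if_neg fun hM' => h ((mem_maxMatchings.mp hM).1.adjd hM')).symm

lemma sum_mul_mu_self (hG : InClassD (DA A)) (i : Fin n) :
    ∑ k, A i k * mu A k i = ∑ M ∈ maxMatchings A, if Matched M i then matchProd A M else 0 := by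
  simp_rw [mul_mu_eq_sum hG]
  rw [Finset.sum_comm]
  exact Finset.sum_congr rfl fun M hM => (mem_maxMatchings.mp hM).1.sum_ite_mk_mem i _

lemma Pendant.sum_mul_eq (hG : InClassD (DA A)) (hi : Pendant (DA A) i)
    (hiq : Adjd (DA A) i q) (f : Fin n → ℝ) : ∑ k, A i k * f k = A i q * f q := by
  refine Finset.sum_eq_single q (fun k _ hkq => ?_) (by simp)
  by_contra hk
  exact hkq (hi.eq_of_adjd (hG.adjd_of_ne_zero (left_ne_zero_of_mul hk)) hiq)

lemma sum_prod_erase_eq_of_pendant {x y : Fin n} (hx : Pendant (DA A) x)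
    (hy : Pendant (DA A) y) (hxq : Adjd (DA A) x q) (hyq : Adjd (DA A) y q) :
    ∑ M ∈ (maxMatchings A).filter (s(x, q) ∈ ·), ∏ e ∈ M.erase s(x, q), cycProd A e =
      ∑ M ∈ (maxMatchings A).filter (s(y, q) ∈ ·), ∏ e ∈ M.erase s(y, q), cycProd A e := by
  have swap : ∀ {x y : Fin n}, Pendant (DA A) y → Adjd (DA A) y q →
      ∀ M ∈ (maxMatchings A).filter (s(x, q) ∈ ·),
        insert s(y, q) (M.erase s(x, q)) ∈ (maxMatchings A).filter (s(y, q) ∈ ·) ∧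
          (insert s(y, q) (M.erase s(x, q))).erase s(y, q) = M.erase s(x, q) := by
    intro x y hy hyq M hM
    rw [Finset.mem_filter, mem_maxMatchings] at hM
    obtain ⟨hmax, hnew⟩ := hM.1.exchange_pendant hM.2 hy hyq
    exact ⟨Finset.mem_filter.mpr ⟨mem_maxMatchings.mpr hmax, Finset.mem_insert_self _ _⟩,
      Finset.erase_insert hnew⟩
  refine Finset.sum_nbij' (fun M => insert s(y, q) (M.erase s(x, q)))
    (fun M => insert s(x, q) (M.erase s(y, q))) (fun M hM => (swap hy hyq M hM).1)
    (fun M hM => (swap hx hxq M hM).1) (fun M hM => ?_) (fun M hM => ?_)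
    (fun M hM => by rw [(swap hy hyq M hM).2])
  · rw [(swap hy hyq M hM).2, Finset.insert_erase (Finset.mem_filter.mp hM).2]
  · rw [(swap hx hxq M hM).2, Finset.insert_erase (Finset.mem_filter.mp hM).2]

lemma mul_mu_comm_of_pendant (hG : InClassD (DA A)) (hi : Pendant (DA A) i)
    (hj : Pendant (DA A) j) (hiq : Adjd (DA A) i q) (hjq : Adjd (DA A) j q) :
    A i q * mu A q j = A q j * mu A i q := by
  rw [mu_of_adjd hG hjq.symm, mu_of_adjd hG hiq, Sym2.eq_swap (a := q) (b := j),
    sum_prod_erase_eq_of_pendant hi hj hiq hjq]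
  ring

lemma exists_adjd_of_mul_mu_ne_zero (hG : InClassD (DA A)) (hij : i ≠ j) {k : Fin n}
    (h : A i k * mu A k j ≠ 0) :
    Pendant (DA A) j ∧ ∃ q, Adjd (DA A) i q ∧ Adjd (DA A) j q ∧ (k = q ∨ Pendant (DA A) k) := by
  have hik := hG.adjd_of_ne_zero (left_ne_zero_of_mul h)
  have hkj : MaxMatchable A k j := by
    by_contra hkj
    exact right_ne_zero_of_mul h (mu_of_not_maxMatchable hkj)
  rcases hkj.exists_mem_or_pendant hG with ⟨M, hM, hkjM⟩ | ⟨hk, hj, u, v, hku, huv, hvj⟩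
  · have hkj := hM.1.adjd hkjM
    have hk : ¬ Pendant (DA A) k := fun hk => hij (hk.eq_of_adjd hik.symm hkj)
    exact ⟨(hG.pendant_or_pendant hM hkjM).resolve_left hk, k, hik, hkj.symm, Or.inl rfl⟩
  · obtain rfl := hk.eq_of_adjd hik.symm hku
    exact ⟨hj, v, huv, hvj.symm, Or.inr hk⟩

end RowSums

section Cancellation

open scoped Classical

variable {n : ℕ} {A : Matrix (Fin n) (Fin n) ℝ} {i j q : Fin n}

-- `k = q` contributes through the 2-cycle `(q, j)`, a pendant neighbour `k` of `i` through the
-- alternating chain `k, i, q, j`.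
lemma mul_mu_eq_sum_of_not_pendant (hG : InClassD (DA A)) (hi : ¬ Pendant (DA A) i)
    (hj : Pendant (DA A) j) (hiq : Adjd (DA A) i q) (hjq : Adjd (DA A) j q) (k : Fin n) :
    A i k * mu A k j = ∑ M ∈ (maxMatchings A).filter (s(q, j) ∈ ·),
      ((if k = q then (1 : ℝ) else 0) - if s(k, i) ∈ M then 1 else 0) *
        (A i q * A q j * ∏ e ∈ M.erase s(q, j), cycProd A e) := by
  have hij : i ≠ j := fun h => hi (h ▸ hj)
  by_cases hkq : k = q
  · subst hkq
    rw [mu_of_adjd hG hjq.symm, Finset.mul_sum, Finset.mul_sum]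
    refine Finset.sum_congr rfl fun M hM => ?_
    obtain ⟨hM, hkj⟩ := Finset.mem_filter.mp hM
    have hki : s(k, i) ∉ M := fun hki => hij <|
      (mem_maxMatchings.mp hM).1.partner_unique (Sym2.eq_swap ▸ hki) (Sym2.eq_swap ▸ hkj)
    rw [if_pos rfl, if_neg hki]
    ring
  by_cases hk : Pendant (DA A) k ∧ Adjd (DA A) i k
  · obtain ⟨hk, hik⟩ := hk
    have hkj : k ≠ j := by
      rintro rfl
      exact hiq.1 (hk.eq_of_adjd hik.symm hjq)
    have hc : IsCycleChainBtw (DA A) k j [k, i, q, j] := isCycleChainBtw_quad.mpr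
      ⟨by simp [hik.1.symm, hkq, hkj, hiq.1, hij, hjq.1.symm], hik.symm, hiq, hjq.symm⟩
    rw [mu_of_pendant_of_pendant hG hc hk hj, Finset.sum_filter, Finset.sum_filter,
      Finset.mul_sum, Finset.mul_sum]
    refine Finset.sum_congr rfl fun M _ => ?_
    by_cases hqjM : s(q, j) ∈ M
    · by_cases hkiM : s(k, i) ∈ M
      · have hne : s(k, i) ≠ s(q, j) := by
          rw [Ne, Sym2.eq_iff]
          rintro (⟨h, -⟩ | ⟨-, h⟩)
          exacts [hkq h, hiq.1 h]
        have hki : s(k, i) ∈ M.erase s(q, j) := Finset.mem_erase.mpr ⟨hne, hkiM⟩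
        rw [← Finset.mul_prod_erase _ _ hki, Finset.erase_right_comm]
        simp only [hkiM, hqjM, hkq, and_self, if_true, if_false, cycProd, Sym2.lift_mk]
        ring
      · simp [hkiM, hqjM, hkq]
    · simp [hqjM]
  · have hlhs : A i k * mu A k j = 0 := by
      by_contra hne
      obtain ⟨-, q', hiq', hjq', hk'⟩ := exists_adjd_of_mul_mu_ne_zero hG hij hne
      obtain rfl := hj.eq_of_adjd hjq hjq'
      exact hk'.elim hkq fun hk' => hk ⟨hk', hG.adjd_of_ne_zero (left_ne_zero_of_mul hne)⟩
    rw [hlhs]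
    refine (Finset.sum_eq_zero fun M hM => ?_).symm
    have hM := (mem_maxMatchings.mp (Finset.mem_filter.mp hM).1)
    have hkiM : s(k, i) ∉ M := fun hkiM =>
      hk ⟨(hG.pendant_or_pendant hM hkiM).resolve_right hi, (hM.1.adjd hkiM).symm⟩
    simp [hkq, hkiM]

lemma sum_mul_mu_eq_zero_of_not_pendant (hG : InClassD (DA A)) (hi : ¬ Pendant (DA A) i)
    (hj : Pendant (DA A) j) (hiq : Adjd (DA A) i q) (hjq : Adjd (DA A) j q) :
    ∑ k, A i k * mu A k j = 0 := by
  simp_rw [mul_mu_eq_sum_of_not_pendant hG hi hj hiq hjq]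
  rw [Finset.sum_comm]
  refine Finset.sum_eq_zero fun M hM => ?_
  have hM := mem_maxMatchings.mp (Finset.mem_filter.mp hM).1
  rw [← Finset.sum_mul, Finset.sum_sub_distrib, Finset.sum_ite_eq', hM.1.sum_ite_mk_mem,
    if_pos (hG.matched_of_not_pendant hM hi), if_pos (Finset.mem_univ q), sub_self, zero_mul]

lemma sum_mul_mu_eq_zero (hG : InClassD (DA A)) (hij : i ≠ j)
    (h : ¬ (Pendant (DA A) i ∧ Pendant (DA A) j ∧ ∃ q, Adjd (DA A) i q ∧ Adjd (DA A) j q)) :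
    ∑ k, A i k * mu A k j = 0 := by
  by_cases hj : Pendant (DA A) j ∧ ∃ q, Adjd (DA A) i q ∧ Adjd (DA A) j q
  · obtain ⟨hj, q, hiq, hjq⟩ := hj
    exact sum_mul_mu_eq_zero_of_not_pendant hG (fun hi => h ⟨hi, hj, q, hiq, hjq⟩) hj hiq hjq
  · refine Finset.sum_eq_zero fun k _ => ?_
    by_contra hk
    obtain ⟨hj', q, hiq, hjq, -⟩ := exists_adjd_of_mul_mu_ne_zero hG hij hk
    exact hj ⟨hj', q, hiq, hjq⟩

end Cancellation

lemma MMi_eq_filter {n : ℕ} (A : Matrix (Fin n) (Fin n) ℝ) (i : Fin n)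
    [DecidablePred (Matched · i)] :
    MMi A i = (maxMatchings A).filter (Matched · i) := by
  ext M
  rw [MMi, Set.Finite.mem_toFinset, Finset.mem_filter, mem_maxMatchings]
  rfl

theorem AB_entries_description_general {n : ℕ} (A : Matrix (Fin n) (Fin n) ℝ)
    (hD : InClassD (DA A)) (hΔ : Delta A ≠ 0)
    (B : Matrix (Fin n) (Fin n) ℝ) (hB : ∀ i j, B i j = mu A i j / Delta A) :
    (∀ i, (¬ Pendant (DA A) i → (A * B) i i = 1) ∧
      (Pendant (DA A) i → (A * B) i i = (∑ M ∈ MMi A i, matchProd A M) / Delta A)) ∧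
    ∀ i j, i ≠ j →
      ((∀ q, Pendant (DA A) i → Pendant (DA A) j → Adjd (DA A) i q → Adjd (DA A) j q →
          (A * B) i j = A q j * mu A i q / Delta A) ∧
        (¬ (Pendant (DA A) i ∧ Pendant (DA A) j ∧
            ∃ q, Adjd (DA A) i q ∧ Adjd (DA A) j q) →
          (A * B) i j = 0)) := by
  classical
  have hAB : ∀ i j, (A * B) i j = (∑ k, A i k * mu A k j) / Delta A := fun i j => by
    simp only [Matrix.mul_apply, hB, mul_div_assoc, Finset.sum_div]
  refine ⟨fun i => ⟨fun hi => ?_, fun _ => ?_⟩,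
    fun i j hij => ⟨fun q hi hj hiq hjq => ?_, fun h => ?_⟩⟩
  · rw [hAB, sum_mul_mu_self hD, ← div_self hΔ, Delta]
    congr 1
    exact Finset.sum_congr rfl fun M hM =>
      if_pos (hD.matched_of_not_pendant (mem_maxMatchings.mp hM) hi)
  · rw [hAB, sum_mul_mu_self hD, MMi_eq_filter, Finset.sum_filter]
  · rw [hAB, hi.sum_mul_eq hD hiq, mul_mu_comm_of_pendant hD hi hj hiq hjq]
  · rw [hAB, sum_mul_mu_eq_zero hD hij h, zero_div]

/-- Corollary 2.7: graph-theoretic description of the entries of `AB` with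
`B = (μ_{ij}/Δ_A)`. -/
theorem AB_entries_description {n : ℕ} (A : Matrix (Fin n) (Fin n) ℝ)
    (hD : InClassD (DA A)) (hSC : StronglyConnected (DA A)) (hΔ : Delta A ≠ 0)
    (B : Matrix (Fin n) (Fin n) ℝ) (hB : ∀ i j, B i j = mu A i j / Delta A) :
    (∀ i, (¬ Pendant (DA A) i → (A * B) i i = 1) ∧
      (Pendant (DA A) i → (A * B) i i = (∑ M ∈ MMi A i, matchProd A M) / Delta A)) ∧
    ∀ i j, i ≠ j →
      ((∀ q, Pendant (DA A) i → Pendant (DA A) j → Adjd (DA A) i q → Adjd (DA A) j q →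
          (A * B) i j = A q j * mu A i q / Delta A) ∧
        (¬ (Pendant (DA A) i ∧ Pendant (DA A) j ∧
            ∃ q, Adjd (DA A) i q ∧ Adjd (DA A) j q) →
          (A * B) i j = 0)) :=
  AB_entries_description_general A hD hΔ B hB
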